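/- arXiv:1804.02708 — 9 statements merged into one kernel-verified Lean document; each statement's English description precedes it below -/
import Mathlib

section
/- Let X and Y be normed spaces, let Ω ⊆ X be an open convex set, let K ⊆ Y be a closed convex pointed cone with dual cone K* = {y* ∈ Y* : y*(v) ≥ 0 for all v ∈ K}, and let k ∈ K. For a continuous mapping f : X → Y and a constant C ≥ 0, the following are equivalent: (i) f is strongly α(·)-k-paraconvex on Ω with constant C; (ii) for every y* ∈ K*, the composite function y* ∘ f : X → ℝ is strongly α(·)-paraconvex on Ω with constant C·y*(k). -/
/-!
A closed convex cone is the intersection of the half-spaces `{φ ≥ 0}` over its dual cone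
(Farkas' lemma, i.e. Hahn–Banach separation of a point from the cone). Applying a dual
functional `φ` to the vector paraconvexity defect of `f` yields, by linearity, exactly the
scalar paraconvexity defect of `φ ∘ f` with constant `C * φ k`.
-/

open Filter Topology Set

lemma Convex.add_mem_of_smul_mem {E : Type*} [AddCommGroup E] [Module ℝ E] {K : Set E}
    (hKconv : Convex ℝ K)
    (hKcone : ∀ ⦃c : ℝ⦄, 0 ≤ c → ∀ ⦃y⦄, y ∈ K → c • y ∈ K) {x y : E} (hx : x ∈ K)
    (hy : y ∈ K) : x + y ∈ K := by
  have hmid : (1 / 2 : ℝ) • x + (1 / 2 : ℝ) • y ∈ K :=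
    hKconv hx hy (by norm_num) (by norm_num) (by norm_num)
  simpa [smul_add, smul_smul] using hKcone zero_le_two hmid

namespace ProperCone

variable {E : Type*} [TopologicalSpace E] [AddCommGroup E] [Module ℝ E]

def ofIsClosed (K : Set E) (hK : K.Nonempty) (hKclosed : IsClosed K) (hKconv : Convex ℝ K)
    (hKcone : ∀ ⦃c : ℝ⦄, 0 ≤ c → ∀ ⦃y⦄, y ∈ K → c • y ∈ K) : ProperCone ℝ E where
  carrier := K
  add_mem' := hKconv.add_mem_of_smul_mem hKcone
  zero_mem' := by simpa using hKcone le_rfl hK.some_mem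
  smul_mem' c _ hx := hKcone c.2 hx
  isClosed' := hKclosed

variable [IsTopologicalAddGroup E] [ContinuousSMul ℝ E] [LocallyConvexSpace ℝ E]

theorem mem_iff_forall_dual_nonneg (C : ProperCone ℝ E) {x : E} :
    x ∈ C ↔ ∀ φ : StrongDual ℝ E, (∀ y ∈ C, 0 ≤ φ y) → 0 ≤ φ x := by
  refine ⟨fun hx φ hφ ↦ hφ x hx, fun h ↦ ?_⟩
  by_contra hx
  obtain ⟨φ, hφ, hφx⟩ := C.hyperplane_separation_point hx
  exact hφx.not_ge (h φ hφ)

end ProperCone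

theorem gateaux_paraconvex_scalarization_general
    {X Y : Type*} [NormedAddCommGroup X] [NormedSpace ℝ X]
    [NormedAddCommGroup Y] [NormedSpace ℝ Y]
    (Ω : Set X)
    (K : Set Y) (hKclosed : IsClosed K) (hKconv : Convex ℝ K)
    (hKcone : ∀ ⦃c : ℝ⦄, 0 ≤ c → ∀ ⦃y⦄, y ∈ K → c • y ∈ K)
    (k : Y) (hk : k ∈ K)
    (α : ℝ → ℝ)
    (f : X → Y) (C : ℝ) :
    (∀ x ∈ Ω, ∀ y ∈ Ω, ∀ l : ℝ, 0 ≤ l → l ≤ 1 →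
        l • f x + (1 - l) • f y + (C * min l (1 - l) * α ‖x - y‖) • k
          - f (l • x + (1 - l) • y) ∈ K)
      ↔ (∀ φ : StrongDual ℝ Y, (∀ v ∈ K, 0 ≤ φ v) →
          ∀ x ∈ Ω, ∀ y ∈ Ω, ∀ l : ℝ, 0 ≤ l → l ≤ 1 →
            φ (f (l • x + (1 - l) • y))
              ≤ l * φ (f x) + (1 - l) * φ (f y)
                + (C * φ k) * min l (1 - l) * α ‖x - y‖) := by
  have hK_dual (v : Y) : v ∈ K ↔ ∀ φ : StrongDual ℝ Y, (∀ w ∈ K, 0 ≤ φ w) → 0 ≤ φ v :=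
    (ProperCone.ofIsClosed K ⟨k, hk⟩ hKclosed hKconv hKcone).mem_iff_forall_dual_nonneg
  have hdefect (φ : StrongDual ℝ Y) (x y : X) (l : ℝ) :
      0 ≤ φ (l • f x + (1 - l) • f y + (C * min l (1 - l) * α ‖x - y‖) • k
          - f (l • x + (1 - l) • y)) ↔
        φ (f (l • x + (1 - l) • y))
          ≤ l * φ (f x) + (1 - l) * φ (f y) + (C * φ k) * min l (1 - l) * α ‖x - y‖ := by
    simp only [map_sub, map_add, map_smul, smul_eq_mul]
    constructor <;> intro <;> linarith
  constructor
  · intro h φ hφK x hx y hy l hl₀ hl₁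
    exact (hdefect φ x y l).1 ((hK_dual _).1 (h x hx y hy l hl₀ hl₁) φ hφK)
  · intro h x hx y hy l hl₀ hl₁
    exact (hK_dual _).2 fun φ hφK ↦ (hdefect φ x y l).2 (h φ hφK x hx y hy l hl₀ hl₁)

/-- For a continuous mapping `f : X → Y` between normed spaces, an open
convex set `Ω ⊆ X`, a closed convex pointed cone `K ⊆ Y`, `k ∈ K` and `C ≥ 0`,
`f` is strongly `α(·)`-`k`-paraconvex on `Ω` with constant `C` iff for every `y*` in the
dual cone `K*` the composite `y* ∘ f` is strongly `α(·)`-paraconvex on `Ω` with constant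
`C · y*(k)`. -/
theorem gateaux_paraconvex_scalarization
    {X Y : Type*} [NormedAddCommGroup X] [NormedSpace ℝ X]
    [NormedAddCommGroup Y] [NormedSpace ℝ Y]
    (Ω : Set X) (hΩopen : IsOpen Ω) (hΩconv : Convex ℝ Ω)
    (K : Set Y) (hKclosed : IsClosed K) (hKconv : Convex ℝ K)
    (hKcone : ∀ ⦃c : ℝ⦄, 0 ≤ c → ∀ ⦃y⦄, y ∈ K → c • y ∈ K)
    (hKpointed : K ∩ (-K) ⊆ {0})
    (k : Y) (hk : k ∈ K)
    (α : ℝ → ℝ) (hαnonneg : ∀ t, 0 ≤ t → 0 ≤ α t) (hαmono : MonotoneOn α (Ici 0))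
    (hαlim : Tendsto (fun t => α t / t) (𝓝[>] (0 : ℝ)) (𝓝 0))
    (f : X → Y) (hf : Continuous f) (C : ℝ) (hC : 0 ≤ C) :
    (∀ x ∈ Ω, ∀ y ∈ Ω, ∀ l : ℝ, 0 ≤ l → l ≤ 1 →
        l • f x + (1 - l) • f y + (C * min l (1 - l) * α ‖x - y‖) • k
          - f (l • x + (1 - l) • y) ∈ K)
      ↔ (∀ φ : StrongDual ℝ Y, (∀ v ∈ K, 0 ≤ φ v) →
          ∀ x ∈ Ω, ∀ y ∈ Ω, ∀ l : ℝ, 0 ≤ l → l ≤ 1 →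
            φ (f (l • x + (1 - l) • y))
              ≤ l * φ (f x) + (1 - l) * φ (f y)
                + (C * φ k) * min l (1 - l) * α ‖x - y‖) :=
  gateaux_paraconvex_scalarization_general Ω K hKclosed hKconv hKcone k hk α f C
end

section
/- Let X be a Hilbert space, Y a Banach space, K ⊆ Y a closed convex cone, k ∈ K, Ω ⊆ X an open convex set, and f : X → Y continuous. Then the following are equivalent: (i) f is strongly 2-k-paraconvex (i.e. strongly α(·)-k-paraconvex with α(t) = t²) on Ω with constant C ≥ 0; (ii) for every y* in the dual cone K*, the function x ↦ y*(f(x)) + C·‖x‖²·y*(k) is convex on Ω. -/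
/-!
Scalarizing by `φ ∈ K*` and adding `C φ(k) ‖·‖²` turns the paraconvexity defect
`C φ(k) min(λ, 1 - λ) ‖x - y‖²` into `C φ(k) (min(λ, 1 - λ) - λ(1 - λ)) ‖x - y‖²`, by the Hilbert
space identity `‖λx + (1 - λ)y‖² = λ‖x‖² + (1 - λ)‖y‖² - λ(1 - λ)‖x - y‖²`, and this defect is
`O(λ²)`. A continuous function whose convexity defect is `O(λ²)` is convex: on a segment, after
subtracting the chord, an interior maximum `M > 0` would satisfy `M ≤ O(λ)` for all small `λ`.
Conversely, the same identity turns convexity of every scalarization into the scalarized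
paraconvexity inequality, and a closed convex cone is the intersection of the half-spaces
`{φ ≥ 0}`, `φ ∈ K*` (Farkas).
-/

open Filter Topology Set

theorem nonpos_on_Icc_of_le_add_sq {F : ℝ → ℝ} (hF : ContinuousOn F (Icc 0 1))
    (h0 : F 0 ≤ 0) (h1 : F 1 ≤ 0) (c : ℝ)
    (H : ∀ t ∈ Icc (0 : ℝ) 1, ∀ μ ∈ Icc (0 : ℝ) 1,
      F ((1 - μ) * t) ≤ μ * F 0 + (1 - μ) * F t + c * (μ * t) ^ 2) :
    ∀ t ∈ Icc (0 : ℝ) 1, F t ≤ 0 := by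
  obtain ⟨t₀, ht₀, hmax⟩ := isCompact_Icc.exists_isMaxOn (nonempty_Icc.2 zero_le_one) hF
  suffices hM : F t₀ ≤ 0 from fun t ht => (hmax ht).trans hM
  by_contra! hM
  have ht₀1 : t₀ < 1 := ht₀.2.lt_of_ne (by rintro rfl; linarith)
  have hlim : Tendsto (fun r => c * (r - t₀) * r) (𝓝[>] t₀) (𝓝 0) :=
    ((by fun_prop : Continuous fun r => c * (r - t₀) * r).tendsto' t₀ 0 (by simp)).mono_left
      nhdsWithin_le_nhds
  refine (ge_of_tendsto hlim ?_).not_gt hM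
  filter_upwards [Ioo_mem_nhdsGT ht₀1] with r ⟨hr₀, hr1⟩
  have hr : 0 < r := ht₀.1.trans_lt hr₀
  set μ := (r - t₀) / r
  have hμ : 0 < μ := div_pos (by linarith) hr
  have hμr : μ * r = r - t₀ := div_mul_cancel₀ _ hr.ne'
  have hcomb : (1 - μ) * r = t₀ := by linarith [sub_mul 1 μ r]
  have hμ1 : 0 ≤ 1 - μ := nonneg_of_mul_nonneg_left (hcomb ▸ ht₀.1) hr
  have key := H r ⟨hr.le, hr1.le⟩ μ ⟨hμ.le, by linarith⟩
  rw [hcomb, hμr] at key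
  have hFr : (1 - μ) * F r ≤ (1 - μ) * F t₀ := mul_le_mul_of_nonneg_left (hmax ⟨hr.le, hr1.le⟩) hμ1
  have hF0 : μ * F 0 ≤ 0 := mul_nonpos_of_nonneg_of_nonpos hμ.le h0
  have herr : c * (r - t₀) ^ 2 = μ * (c * (r - t₀) * r) := by rw [← hμr]; ring
  exact le_of_mul_le_mul_left (by linarith) hμ

theorem convexOn_of_le_add_mul_sq {E : Type*} [SeminormedAddCommGroup E] [NormedSpace ℝ E]
    {s : Set E} {g : E → ℝ} (hs : Convex ℝ s) (hg : ContinuousOn g s) (c : ℝ)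
    (h : ∀ x ∈ s, ∀ y ∈ s, ∀ μ ∈ Icc (0 : ℝ) 1,
      g (μ • x + (1 - μ) • y) ≤ μ * g x + (1 - μ) * g y + c * μ ^ 2 * ‖x - y‖ ^ 2) :
    ConvexOn ℝ s g := by
  refine ⟨hs, fun x hx y hy a b ha hb hab => ?_⟩
  obtain rfl : b = 1 - a := by linarith
  let p : ℝ → E := fun t => t • x + (1 - t) • y
  have hp : MapsTo p (Icc 0 1) s := fun t ht => hs hx hy ht.1 (sub_nonneg.2 ht.2) (by ring)
  let F : ℝ → ℝ := fun t => g (p t) - t * g x - (1 - t) * g y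
  have hF : ContinuousOn F (Icc 0 1) :=
    ((hg.comp (by fun_prop : Continuous p).continuousOn hp).sub (by fun_prop)).sub (by fun_prop)
  have H : ∀ t ∈ Icc (0 : ℝ) 1, ∀ μ ∈ Icc (0 : ℝ) 1,
      F ((1 - μ) * t) ≤ μ * F 0 + (1 - μ) * F t + c * ‖x - y‖ ^ 2 * (μ * t) ^ 2 := by
    intro t ht μ hμ
    have hcomb : μ • y + (1 - μ) • p t = p ((1 - μ) * t) := by simp only [p]; module
    have hdist : ‖y - p t‖ = t * ‖x - y‖ := by
      rw [show y - p t = t • (y - x) by simp only [p]; module, norm_smul, norm_sub_rev,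
        Real.norm_of_nonneg ht.1]
    have := h y hy (p t) (hp ht) μ hμ
    rw [hcomb, hdist] at this
    simp only [F, p, zero_smul, one_smul, zero_add, sub_zero] at this ⊢
    linear_combination this
  have := nonpos_on_Icc_of_le_add_sq hF (by simp [F, p]) (by simp [F, p]) _ H a ⟨ha, by linarith⟩
  simp only [F, p, smul_eq_mul] at this ⊢
  linarith

theorem mem_of_forall_dual_nonneg {E : Type*} [TopologicalSpace E] [AddCommGroup E]
    [IsTopologicalAddGroup E] [Module ℝ E] [ContinuousSMul ℝ E] [LocallyConvexSpace ℝ E]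
    {K : Set E} (hKclosed : IsClosed K) (hKconv : Convex ℝ K)
    (hKcone : ∀ ⦃c : ℝ⦄, 0 ≤ c → ∀ ⦃y⦄, y ∈ K → c • y ∈ K) (hK : K.Nonempty) {w : E}
    (hw : ∀ φ : StrongDual ℝ E, (∀ v ∈ K, 0 ≤ φ v) → 0 ≤ φ w) : w ∈ K := by
  let C : ProperCone ℝ E :=
    { carrier := K
      add_mem' := fun {x y} hx hy => by
        simpa [smul_add, smul_smul] using hKcone zero_le_two (hKconv hx hy one_half_pos.le
          one_half_pos.le (add_halves 1))
      zero_mem' := by simpa using hKcone le_rfl hK.some_mem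
      smul_mem' := fun c _ hx => hKcone c.2 hx
      isClosed' := hKclosed }
  by_contra hwK
  obtain ⟨φ, hφ, hφw⟩ := C.hyperplane_separation_point (x₀ := w) hwK
  exact (hw φ hφ).not_gt hφw

theorem norm_smul_add_one_sub_smul_sq {X : Type*} [NormedAddCommGroup X] [InnerProductSpace ℝ X]
    (x y : X) (μ : ℝ) :
    ‖μ • x + (1 - μ) • y‖ ^ 2 = μ * ‖x‖ ^ 2 + (1 - μ) * ‖y‖ ^ 2 - μ * (1 - μ) * ‖x - y‖ ^ 2 := by
  rw [norm_add_sq_real, norm_sub_sq_real, norm_smul, norm_smul, real_inner_smul_left,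
    real_inner_smul_right, mul_pow, mul_pow, Real.norm_eq_abs, Real.norm_eq_abs, sq_abs, sq_abs]
  ring

theorem mul_one_sub_le_min {μ : ℝ} (h0 : 0 ≤ μ) (h1 : μ ≤ 1) : μ * (1 - μ) ≤ min μ (1 - μ) :=
  le_min (mul_le_of_le_one_right h0 (by linarith)) (mul_le_of_le_one_left (by linarith) h1)

theorem min_sub_mul_one_sub_le_sq (μ : ℝ) : min μ (1 - μ) - μ * (1 - μ) ≤ μ ^ 2 := by
  rcases le_total μ (1 - μ) with h | h
  · rw [min_eq_left h]; nlinarith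
  · rw [min_eq_right h]; nlinarith

theorem strongly_two_paraconvex_iff_convex_scalarization_general
    {X Y : Type*} [NormedAddCommGroup X] [InnerProductSpace ℝ X]
    [NormedAddCommGroup Y] [NormedSpace ℝ Y]
    (K : Set Y) (hKclosed : IsClosed K) (hKconv : Convex ℝ K)
    (hKcone : ∀ ⦃c : ℝ⦄, 0 ≤ c → ∀ ⦃y⦄, y ∈ K → c • y ∈ K)
    (k : Y) (hk : k ∈ K)
    (Ω : Set X) (hΩconv : Convex ℝ Ω)
    (f : X → Y) (hf : Continuous f) (C : ℝ) (hC : 0 ≤ C) :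
    (∀ x ∈ Ω, ∀ y ∈ Ω, ∀ l : ℝ, 0 ≤ l → l ≤ 1 →
        l • f x + (1 - l) • f y + (C * min l (1 - l) * ‖x - y‖ ^ 2) • k
          - f (l • x + (1 - l) • y) ∈ K)
      ↔ (∀ φ : StrongDual ℝ Y, (∀ v ∈ K, 0 ≤ φ v) →
          ConvexOn ℝ Ω (fun x => φ (f x) + C * ‖x‖ ^ 2 * φ k)) := by
  constructor
  · intro h φ hφ
    refine convexOn_of_le_add_mul_sq hΩconv (by fun_prop : Continuous _).continuousOn (C * φ k)
      fun x hx y hy μ hμ => ?_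
    have hpara := hφ _ (h x hx y hy μ hμ.1 hμ.2)
    simp only [map_sub, map_add, map_smul, smul_eq_mul] at hpara
    have hmin := mul_le_mul_of_nonneg_right (min_sub_mul_one_sub_le_sq μ)
      (mul_nonneg (mul_nonneg hC (hφ k hk)) (sq_nonneg ‖x - y‖))
    rw [norm_smul_add_one_sub_smul_sq]
    linear_combination hpara + hmin
  · intro hconv x hx y hy l hl0 hl1
    refine mem_of_forall_dual_nonneg hKclosed hKconv hKcone ⟨k, hk⟩ fun φ hφ => ?_
    have hconvex := (hconv φ hφ).2 hx hy hl0 (sub_nonneg.2 hl1) (add_sub_cancel l 1)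
    simp only [smul_eq_mul, norm_smul_add_one_sub_smul_sq] at hconvex
    have hmin := mul_le_mul_of_nonneg_right (sub_nonneg.2 (mul_one_sub_le_min hl0 hl1))
      (mul_nonneg (mul_nonneg hC (hφ k hk)) (sq_nonneg ‖x - y‖))
    simp only [map_sub, map_add, map_smul, smul_eq_mul]
    linear_combination hconvex + hmin

/-- For `X` a Hilbert space, `Y` a Banach space, `K ⊆ Y` a closed convex
cone, `k ∈ K`, `Ω ⊆ X` open convex and `f : X → Y` continuous: `f` is strongly
`2`-`k`-paraconvex (i.e. `α(t) = t²`) on `Ω` with constant `C ≥ 0` iff for every `y*` in the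
dual cone `K*` the function `x ↦ y*(f(x)) + C‖x‖² y*(k)` is convex on `Ω`. -/
theorem strongly_two_paraconvex_iff_convex_scalarization
    {X Y : Type*} [NormedAddCommGroup X] [InnerProductSpace ℝ X] [CompleteSpace X]
    [NormedAddCommGroup Y] [NormedSpace ℝ Y] [CompleteSpace Y]
    (K : Set Y) (hKclosed : IsClosed K) (hKconv : Convex ℝ K)
    (hKcone : ∀ ⦃c : ℝ⦄, 0 ≤ c → ∀ ⦃y⦄, y ∈ K → c • y ∈ K)
    (k : Y) (hk : k ∈ K)
    (Ω : Set X) (hΩopen : IsOpen Ω) (hΩconv : Convex ℝ Ω)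
    (f : X → Y) (hf : Continuous f) (C : ℝ) (hC : 0 ≤ C) :
    (∀ x ∈ Ω, ∀ y ∈ Ω, ∀ l : ℝ, 0 ≤ l → l ≤ 1 →
        l • f x + (1 - l) • f y + (C * min l (1 - l) * ‖x - y‖ ^ 2) • k
          - f (l • x + (1 - l) • y) ∈ K)
      ↔ (∀ φ : StrongDual ℝ Y, (∀ v ∈ K, 0 ≤ φ v) →
          ConvexOn ℝ Ω (fun x => φ (f x) + C * ‖x‖ ^ 2 * φ k)) :=
  strongly_two_paraconvex_iff_convex_scalarization_general K hKclosed hKconv hKcone k hk Ω hΩconv f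
    hf C hC
end

section
/- Let X and Y be normed spaces, Ω ⊆ X an open convex set, K ⊆ Y a closed convex cone, k ∈ K, and f : X → Y continuous. Then there exists C ≥ 0 such that f(λx + (1−λ)y) ≤_K λf(x) + (1−λ)f(y) + C·min{λ,1−λ}·α(‖x−y‖)·k for all x, y ∈ Ω and λ ∈ [0,1] if and only if there exists C₁ ≥ 0 such that f(λx + (1−λ)y) ≤_K λf(x) + (1−λ)f(y) + C₁·λ(1−λ)·α(‖x−y‖)·k for all x, y ∈ Ω and λ ∈ [0,1]. -/
open Filter Topology Set

/-- For normed spaces `X, Y`, an open convex `Ω ⊆ X`, a closed convex cone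
`K ⊆ Y`, `k ∈ K` and continuous `f : X → Y`: there is `C ≥ 0` such that the
`min{λ, 1-λ}` form of strong `α(·)`-`k`-paraconvexity holds on `Ω` iff there is `C₁ ≥ 0`
such that the `λ(1-λ)` form holds on `Ω`. -/
theorem paraconvex_min_iff_mul
    {X Y : Type*} [NormedAddCommGroup X] [NormedSpace ℝ X]
    [NormedAddCommGroup Y] [NormedSpace ℝ Y]
    (Ω : Set X) (hΩopen : IsOpen Ω) (hΩconv : Convex ℝ Ω)
    (K : Set Y) (hKclosed : IsClosed K) (hKconv : Convex ℝ K)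
    (hKcone : ∀ ⦃c : ℝ⦄, 0 ≤ c → ∀ ⦃y⦄, y ∈ K → c • y ∈ K)
    (k : Y) (hk : k ∈ K)
    (α : ℝ → ℝ) (hαnonneg : ∀ t, 0 ≤ t → 0 ≤ α t) (hαmono : MonotoneOn α (Ici 0))
    (hαlim : Tendsto (fun t => α t / t) (𝓝[>] (0 : ℝ)) (𝓝 0))
    (f : X → Y) (hf : Continuous f) :
    (∃ C : ℝ, 0 ≤ C ∧ ∀ x ∈ Ω, ∀ y ∈ Ω, ∀ l : ℝ, 0 ≤ l → l ≤ 1 →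
        l • f x + (1 - l) • f y + (C * min l (1 - l) * α ‖x - y‖) • k
          - f (l • x + (1 - l) • y) ∈ K)
      ↔ (∃ C₁ : ℝ, 0 ≤ C₁ ∧ ∀ x ∈ Ω, ∀ y ∈ Ω, ∀ l : ℝ, 0 ≤ l → l ≤ 1 →
          l • f x + (1 - l) • f y + (C₁ * (l * (1 - l)) * α ‖x - y‖) • k
            - f (l • x + (1 - l) • y) ∈ K) := by
  have hadd : ∀ a ∈ K, ∀ b ∈ K, a + b ∈ K := by
    intro a ha b hb
    have h := hKconv ha hb (by norm_num : (0:ℝ) ≤ 1/2) (by norm_num : (0:ℝ) ≤ 1/2)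
      (by norm_num)
    have h2 := hKcone (by norm_num : (0:ℝ) ≤ 2) h
    rw [smul_add, smul_smul, smul_smul] at h2
    norm_num at h2
    simpa [one_smul] using h2
  constructor
  · rintro ⟨C, hC, h⟩
    refine ⟨2 * C, by linarith, fun x hx y hy l hl0 hl1 => ?_⟩
    have hmem := h x hx y hy l hl0 hl1
    have hcoef : C * min l (1 - l) ≤ 2 * C * (l * (1 - l)) := by
      rcases le_total l (1 - l) with h' | h'
      · rw [min_eq_left h']
        nlinarith [mul_nonneg (mul_nonneg hC hl0) (by linarith : (0:ℝ) ≤ 1 - 2*l)]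
      · rw [min_eq_right h']
        nlinarith [mul_nonneg (mul_nonneg hC (by linarith : (0:ℝ) ≤ 1 - l)) (by linarith : (0:ℝ) ≤ 2*l - 1)]
    have hα : 0 ≤ α ‖x - y‖ := hαnonneg _ (norm_nonneg _)
    have hd : 0 ≤ (2 * C * (l * (1 - l)) - C * min l (1 - l)) * α ‖x - y‖ := by
      apply mul_nonneg (by linarith) hα
    have hk' := hKcone hd hk
    have := hadd _ hmem _ hk'
    convert this using 1
    module
  · rintro ⟨C₁, hC₁, h⟩
    refine ⟨C₁, hC₁, fun x hx y hy l hl0 hl1 => ?_⟩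
    have hmem := h x hx y hy l hl0 hl1
    have hcoef : C₁ * (l * (1 - l)) ≤ C₁ * min l (1 - l) := by
      apply mul_le_mul_of_nonneg_left _ hC₁
      apply le_min <;> nlinarith
    have hα : 0 ≤ α ‖x - y‖ := hαnonneg _ (norm_nonneg _)
    have hd : 0 ≤ (C₁ * min l (1 - l) - C₁ * (l * (1 - l))) * α ‖x - y‖ := by
      apply mul_nonneg (by linarith) hα
    have hk' := hKcone hd hk
    have := hadd _ hmem _ hk'
    convert this using 1
    module
end

section
/- Let X be a normed space and Y a Banach space, let K ⊆ Y be a closed convex cone, and let f : X → Y be strongly α(·)-k-paraconvex on an open convex set Ω ⊆ X with constant C ≥ 0 and k ∈ K \ {0}. Then for every x₀ ∈ Ω and every admissible direction h ∈ X with ‖h‖ = 1, the mapping φ(t) := (f(x₀+th) − f(x₀+t₀h))/(t−t₀) + C·(α(t−t₀)/(t−t₀))·k (defined for t > t₀, with t₀ ∈ ℝ) is α(·)-nondecreasing, i.e. φ(t) − φ(t₁) + C·(α(t₁−t₀)/(t₁−t₀))·k ∈ K for all t₀ < t₁ < t (with x₀+th, x₀+t₁h, x₀+t₀h ∈ Ω).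 -/
open Filter Topology Set

/-! Restricted to the line `s ↦ x₀ + s • h`, paraconvexity at the pair `t₀ < t` with weight
`l = (t₁ - t₀) / (t - t₀)` says that `f (x₀ + t₁ • h)` lies below the chord up to the error
`C · min l (1 - l) · α (t - t₀) · k`. Dividing by `t₁ - t₀` turns this into a comparison of the
slopes from `t₀`, and since `min l (1 - l) / (t₁ - t₀) ≤ l / (t₁ - t₀) = 1 / (t - t₀)` the error
term is dominated by `C · α (t - t₀) / (t - t₀) · k`. -/

section ConeOrder

variable {E : Type*} [AddCommGroup E] [Module ℝ E] {K : Set E}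

theorem add_mem_of_convex_of_smul_mem (hKconv : Convex ℝ K)
    (hKcone : ∀ ⦃c : ℝ⦄, 0 ≤ c → ∀ ⦃y⦄, y ∈ K → c • y ∈ K) {a b : E} (ha : a ∈ K)
    (hb : b ∈ K) : a + b ∈ K := by
  have hmid := hKconv ha hb (by norm_num : (0 : ℝ) ≤ 1 / 2) (by norm_num : (0 : ℝ) ≤ 1 / 2)
    (by norm_num)
  convert hKcone (by norm_num : (0 : ℝ) ≤ 2) hmid using 1
  module

theorem add_smul_mem_of_le (hKconv : Convex ℝ K)
    (hKcone : ∀ ⦃c : ℝ⦄, 0 ≤ c → ∀ ⦃y⦄, y ∈ K → c • y ∈ K) {k y : E} (hk : k ∈ K)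
    {a b : ℝ} (hab : a ≤ b) (hy : y + a • k ∈ K) : y + b • k ∈ K := by
  convert add_mem_of_convex_of_smul_mem hKconv hKcone hy (hKcone (sub_nonneg.2 hab) hk) using 1
  module

theorem slope_sub_slope_add_smul_mem (hKconv : Convex ℝ K)
    (hKcone : ∀ ⦃c : ℝ⦄, 0 ≤ c → ∀ ⦃y⦄, y ∈ K → c • y ∈ K) {k : E} (hk : k ∈ K)
    {g : ℝ → E} {C a t₀ t₁ t : ℝ} (hC : 0 ≤ C) (ha : 0 ≤ a) (ht₀t₁ : t₀ < t₁) (ht₁t : t₁ < t)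
    (hg : ∀ l : ℝ, 0 ≤ l → l ≤ 1 →
      l • g t + (1 - l) • g t₀ + (C * min l (1 - l) * a) • k - g (l * t + (1 - l) * t₀) ∈ K) :
    slope g t₀ t - slope g t₀ t₁ + (C * (a / (t - t₀))) • k ∈ K := by
  have hd : 0 < t - t₀ := by linarith
  have hd₁ : 0 < t₁ - t₀ := by linarith
  set l := (t₁ - t₀) / (t - t₀) with hl
  have hl1 : l ≤ 1 := (div_le_one hd).2 (by linarith)
  have hpoint : l * t + (1 - l) * t₀ = t₁ := by
    rw [hl]; field_simp; ring
  have hchord := hKcone (inv_nonneg.2 hd₁.le) (hg l (by positivity) hl1)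
  rw [hpoint] at hchord
  have hcoeff : (t₁ - t₀)⁻¹ * (C * min l (1 - l) * a) ≤ C * (a / (t - t₀)) :=
    calc (t₁ - t₀)⁻¹ * (C * min l (1 - l) * a) ≤ (t₁ - t₀)⁻¹ * (C * l * a) := by
          gcongr; exact min_le_left _ _
      _ = C * (a / (t - t₀)) := by rw [hl]; field_simp
  refine add_smul_mem_of_le hKconv hKcone hk hcoeff ?_
  convert hchord using 1
  rw [slope_def_module, slope_def_module, hl]
  match_scalars <;> field_simp; ring

end ConeOrder

theorem paraconvex_restrict_line {X Y : Type*} [NormedAddCommGroup X] [NormedSpace ℝ X]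
    [AddCommGroup Y] [Module ℝ Y] {K : Set Y} {k : Y} {Ω : Set X} {α : ℝ → ℝ} {f : X → Y}
    {C : ℝ}
    (hpara : ∀ x ∈ Ω, ∀ y ∈ Ω, ∀ l : ℝ, 0 ≤ l → l ≤ 1 →
        l • f x + (1 - l) • f y + (C * min l (1 - l) * α ‖x - y‖) • k
          - f (l • x + (1 - l) • y) ∈ K)
    {x₀ h : X} (hnorm : ‖h‖ = 1) {s u : ℝ} (hsu : s ≤ u) (hs : x₀ + s • h ∈ Ω)
    (hu : x₀ + u • h ∈ Ω) (l : ℝ) (hl0 : 0 ≤ l) (hl1 : l ≤ 1) :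
    l • f (x₀ + u • h) + (1 - l) • f (x₀ + s • h) + (C * min l (1 - l) * α (u - s)) • k
      - f (x₀ + (l * u + (1 - l) * s) • h) ∈ K := by
  have hdist : ‖(x₀ + u • h) - (x₀ + s • h)‖ = u - s := by
    rw [add_sub_add_left_eq_sub, ← sub_smul, norm_smul, hnorm, mul_one,
      Real.norm_of_nonneg (sub_nonneg.2 hsu)]
  have hpoint : l • (x₀ + u • h) + (1 - l) • (x₀ + s • h) = x₀ + (l * u + (1 - l) * s) • h := by
    module
  simpa only [hdist, hpoint] using hpara _ hu _ hs l hl0 hl1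

theorem paraconvex_difference_quotient_alpha_nondecreasing_general
    {X Y : Type*} [NormedAddCommGroup X] [NormedSpace ℝ X]
    [NormedAddCommGroup Y] [NormedSpace ℝ Y]
    (K : Set Y) (hKconv : Convex ℝ K)
    (hKcone : ∀ ⦃c : ℝ⦄, 0 ≤ c → ∀ ⦃y⦄, y ∈ K → c • y ∈ K)
    (k : Y) (hk : k ∈ K)
    (Ω : Set X)
    (α : ℝ → ℝ) (hαnonneg : ∀ t, 0 ≤ t → 0 ≤ α t)
    (f : X → Y) (C : ℝ) (hC : 0 ≤ C)
    (hpara : ∀ x ∈ Ω, ∀ y ∈ Ω, ∀ l : ℝ, 0 ≤ l → l ≤ 1 →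
        l • f x + (1 - l) • f y + (C * min l (1 - l) * α ‖x - y‖) • k
          - f (l • x + (1 - l) • y) ∈ K)
    (x₀ : X) (h : X) (hnorm : ‖h‖ = 1)
    (t₀ t₁ t : ℝ) (ht₀t₁ : t₀ < t₁) (ht₁t : t₁ < t)
    (hmem₀ : x₀ + t₀ • h ∈ Ω) (hmem : x₀ + t • h ∈ Ω) :
    ((t - t₀)⁻¹ • (f (x₀ + t • h) - f (x₀ + t₀ • h)) + (C * (α (t - t₀) / (t - t₀))) • k)
      - ((t₁ - t₀)⁻¹ • (f (x₀ + t₁ • h) - f (x₀ + t₀ • h))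
          + (C * (α (t₁ - t₀) / (t₁ - t₀))) • k)
      + (C * (α (t₁ - t₀) / (t₁ - t₀))) • k ∈ K := by
  have hslopes := slope_sub_slope_add_smul_mem (g := fun s => f (x₀ + s • h)) hKconv hKcone hk
    hC (hαnonneg _ (by linarith)) ht₀t₁ ht₁t
    (paraconvex_restrict_line hpara hnorm (by linarith) hmem₀ hmem)
  convert hslopes using 1
  simp only [slope_def_module]
  abel

/-- Let `f : X → Y` be strongly `α(·)`-`k`-paraconvex on an open convex
`Ω ⊆ X` with constant `C ≥ 0`, `k ∈ K \ {0}`. For `x₀ ∈ Ω` and an admissible direction `h`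
with `‖h‖ = 1`, the map `φ(t) = (f(x₀+th) − f(x₀+t₀h))/(t−t₀) + C (α(t−t₀)/(t−t₀)) k`
(for `t > t₀`) is `α(·)`-nondecreasing: `φ(t) − φ(t₁) + C (α(t₁−t₀)/(t₁−t₀)) k ∈ K`
for all `t₀ < t₁ < t` (with the relevant points in `Ω`). -/
theorem paraconvex_difference_quotient_alpha_nondecreasing
    {X Y : Type*} [NormedAddCommGroup X] [NormedSpace ℝ X]
    [NormedAddCommGroup Y] [NormedSpace ℝ Y] [CompleteSpace Y]
    (K : Set Y) (hKclosed : IsClosed K) (hKconv : Convex ℝ K)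
    (hKcone : ∀ ⦃c : ℝ⦄, 0 ≤ c → ∀ ⦃y⦄, y ∈ K → c • y ∈ K)
    (k : Y) (hk : k ∈ K) (hk0 : k ≠ 0)
    (Ω : Set X) (hΩopen : IsOpen Ω) (hΩconv : Convex ℝ Ω)
    (α : ℝ → ℝ) (hαnonneg : ∀ t, 0 ≤ t → 0 ≤ α t) (hαmono : MonotoneOn α (Ici 0))
    (hαlim : Tendsto (fun t => α t / t) (𝓝[>] (0 : ℝ)) (𝓝 0))
    (f : X → Y) (hf : Continuous f) (C : ℝ) (hC : 0 ≤ C)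
    (hpara : ∀ x ∈ Ω, ∀ y ∈ Ω, ∀ l : ℝ, 0 ≤ l → l ≤ 1 →
        l • f x + (1 - l) • f y + (C * min l (1 - l) * α ‖x - y‖) • k
          - f (l • x + (1 - l) • y) ∈ K)
    (x₀ : X) (hx₀ : x₀ ∈ Ω) (h : X) (hnorm : ‖h‖ = 1)
    (hadm : ∃ ε > 0, ∀ t : ℝ, 0 < t → t < ε → x₀ + t • h ∈ Ω)
    (t₀ t₁ t : ℝ) (ht₀t₁ : t₀ < t₁) (ht₁t : t₁ < t)
    (hmem₀ : x₀ + t₀ • h ∈ Ω) (hmem₁ : x₀ + t₁ • h ∈ Ω) (hmem : x₀ + t • h ∈ Ω) :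
    ((t - t₀)⁻¹ • (f (x₀ + t • h) - f (x₀ + t₀ • h)) + (C * (α (t - t₀) / (t - t₀))) • k)
      - ((t₁ - t₀)⁻¹ • (f (x₀ + t₁ • h) - f (x₀ + t₀ • h))
          + (C * (α (t₁ - t₀) / (t₁ - t₀))) • k)
      + (C * (α (t₁ - t₀) / (t₁ - t₀))) • k ∈ K :=
  paraconvex_difference_quotient_alpha_nondecreasing_general K hKconv hKcone k hk Ω α hαnonneg f C
    hC hpara x₀ h hnorm t₀ t₁ t ht₀t₁ ht₁t hmem₀ hmem
end

section
/- Let X be a normed space and Y a Banach space, let K ⊆ Y be a closed convex cone, and let f : X → Y be strongly α(·)-k-paraconvex on an open convex set Ω ⊆ X with constant C ≥ 0 and k ∈ K \ {0}. Then for every x₀ ∈ Ω and every admissible direction h ∈ X with ‖h‖ = 1, the mapping φ(t) := (f(x₀+th) − f(x₀))/t + C·(α(t)/t)·k (for t > 0) is locally K-bounded from below: there exist a ∈ Y and δ > 0 such that φ(t) − a ∈ K for all 0 < t < δ. -/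
open Filter Topology Set

/-! The paraconvexity inequality on the segment from `x₀ - s • h` to `x₀ + t • h`, evaluated at
its interior point `x₀`, is a paraconvex version of the monotonicity of slopes of a convex
function: the forward difference quotient at `x₀` dominates the backward one up to the error
`C α((s + t)‖h‖) / max s t • k`. Fixing `s` and bounding the error uniformly for `t < ε` by
monotonicity of `α` gives the lower bound, with the extra term `C (α t / t) • k ∈ K` discarded. -/

lemma add_mem_of_convex_of_smul_mem_s4 {Y : Type*} [AddCommGroup Y] [Module ℝ Y] {K : Set Y}
    (hKconv : Convex ℝ K) (hKcone : ∀ ⦃c : ℝ⦄, 0 ≤ c → ∀ ⦃y⦄, y ∈ K → c • y ∈ K)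
    {u v : Y} (hu : u ∈ K) (hv : v ∈ K) : u + v ∈ K := by
  have hmid : (2⁻¹ : ℝ) • u + (2⁻¹ : ℝ) • v ∈ K :=
    hKconv hu hv (by norm_num) (by norm_num) (by norm_num)
  convert hKcone zero_le_two hmid using 1
  module

lemma exists_pos_sub_smul_mem {X : Type*} [NormedAddCommGroup X] [NormedSpace ℝ X]
    {Ω : Set X} (hΩ : IsOpen Ω) {x₀ : X} (hx₀ : x₀ ∈ Ω) (h : X) :
    ∃ s : ℝ, 0 < s ∧ x₀ - s • h ∈ Ω := by
  have hcont : Continuous fun s : ℝ => x₀ - s • h := by fun_prop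
  have hnhds : ∀ᶠ s in 𝓝 (0 : ℝ), x₀ - s • h ∈ Ω :=
    hcont.continuousAt.preimage_mem_nhds (by simpa using hΩ.mem_nhds hx₀)
  obtain ⟨s, hsΩ, hs⟩ :=
    ((hnhds.filter_mono (nhdsWithin_le_nhds (s := Ioi 0))).and self_mem_nhdsWithin).exists
  exact ⟨s, hs, hsΩ⟩

section Paraconvex

variable {X Y : Type*} [NormedAddCommGroup X] [NormedSpace ℝ X] [AddCommGroup Y] [Module ℝ Y]

def StronglyParaconvexOn (K : Set Y) (k : Y) (C : ℝ) (α : ℝ → ℝ) (Ω : Set X) (f : X → Y) :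
    Prop :=
  ∀ x ∈ Ω, ∀ y ∈ Ω, ∀ l : ℝ, 0 ≤ l → l ≤ 1 →
    l • f x + (1 - l) • f y + (C * min l (1 - l) * α ‖x - y‖) • k - f (l • x + (1 - l) • y) ∈ K

lemma StronglyParaconvexOn.slope_sub_slope_mem {K : Set Y} {k : Y} {C : ℝ} {α : ℝ → ℝ}
    {Ω : Set X} {f : X → Y} (hf : StronglyParaconvexOn K k C α Ω f)
    (hKcone : ∀ ⦃c : ℝ⦄, 0 ≤ c → ∀ ⦃y⦄, y ∈ K → c • y ∈ K)
    {x₀ h : X} {s t : ℝ} (hs : 0 < s) (ht : 0 < t)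
    (hsΩ : x₀ - s • h ∈ Ω) (htΩ : x₀ + t • h ∈ Ω) :
    t⁻¹ • (f (x₀ + t • h) - f x₀) - s⁻¹ • (f x₀ - f (x₀ - s • h))
      + (C * α ((s + t) * ‖h‖) / max s t) • k ∈ K := by
  set l := s / (s + t) with hl
  have hst : 0 < s + t := add_pos hs ht
  have hl1 : l ≤ 1 := div_le_one_of_le₀ (by linarith) hst.le
  have hcomb : l • (x₀ + t • h) + (1 - l) • (x₀ - s • h) = x₀ := by
    have hcoef : l * t - (1 - l) * s = 0 := by rw [hl]; field_simp; ring
    calc l • (x₀ + t • h) + (1 - l) • (x₀ - s • h) = x₀ + (l * t - (1 - l) * s) • h := by module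
      _ = x₀ := by rw [hcoef, zero_smul, add_zero]
  have hdist : ‖(x₀ + t • h) - (x₀ - s • h)‖ = (s + t) * ‖h‖ := by
    rw [show (x₀ + t • h) - (x₀ - s • h) = (s + t) • h by module, norm_smul,
      Real.norm_of_nonneg hst.le]
  have hmin : min l (1 - l) = min s t / (s + t) := by
    rw [show 1 - l = t / (s + t) by rw [hl]; field_simp; ring, hl, min_div_div_right hst.le]
  have key := hf _ htΩ _ hsΩ l (by positivity) hl1
  rw [hcomb, hdist, hmin] at key
  -- divide by `t * l = s * t / (s + t)`
  convert hKcone (by positivity : 0 ≤ (s + t) / (s * t)) key using 1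
  have hmax : max s t = s * t / min s t := by
    rw [eq_div_iff (lt_min hs ht).ne', mul_comm, min_mul_max]
  rw [hmax, hl]
  match_scalars <;> field_simp <;> ring

end Paraconvex

theorem paraconvex_difference_quotient_bounded_below_general
    {X Y : Type*} [NormedAddCommGroup X] [NormedSpace ℝ X]
    [NormedAddCommGroup Y] [NormedSpace ℝ Y]
    (K : Set Y) (hKconv : Convex ℝ K)
    (hKcone : ∀ ⦃c : ℝ⦄, 0 ≤ c → ∀ ⦃y⦄, y ∈ K → c • y ∈ K)
    (k : Y) (hk : k ∈ K)
    (Ω : Set X) (hΩopen : IsOpen Ω)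
    (α : ℝ → ℝ) (hαnonneg : ∀ t, 0 ≤ t → 0 ≤ α t) (hαmono : MonotoneOn α (Ici 0))
    (f : X → Y) (C : ℝ) (hC : 0 ≤ C)
    (hpara : ∀ x ∈ Ω, ∀ y ∈ Ω, ∀ l : ℝ, 0 ≤ l → l ≤ 1 →
        l • f x + (1 - l) • f y + (C * min l (1 - l) * α ‖x - y‖) • k
          - f (l • x + (1 - l) • y) ∈ K)
    (x₀ : X) (hx₀ : x₀ ∈ Ω) (h : X)
    (hadm : ∃ ε > 0, ∀ t : ℝ, 0 < t → t < ε → x₀ + t • h ∈ Ω) :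
    ∃ a : Y, ∃ δ > 0, ∀ t : ℝ, 0 < t → t < δ →
      (t⁻¹ • (f (x₀ + t • h) - f x₀) + (C * (α t / t)) • k) - a ∈ K := by
  obtain ⟨ε, hε, hεΩ⟩ := hadm
  obtain ⟨s, hs, hsΩ⟩ := exists_pos_sub_smul_mem hΩopen hx₀ h
  refine ⟨s⁻¹ • (f x₀ - f (x₀ - s • h)) - (C * α ((s + ε) * ‖h‖) / s) • k, ε, hε,
    fun t ht htε => ?_⟩
  have hslope := StronglyParaconvexOn.slope_sub_slope_mem hpara hKcone hs ht hsΩ (hεΩ t ht htε)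
  have hαst : 0 ≤ α ((s + t) * ‖h‖) := hαnonneg _ (by positivity)
  have herr : C * α ((s + t) * ‖h‖) / max s t ≤ C * α ((s + ε) * ‖h‖) / s :=
    calc C * α ((s + t) * ‖h‖) / max s t ≤ C * α ((s + t) * ‖h‖) / s := by
          gcongr; exact le_max_left s t
      _ ≤ C * α ((s + ε) * ‖h‖) / s := by
          gcongr
          exact hαmono (by simp only [mem_Ici]; positivity)
            (by simp only [mem_Ici]; positivity) (by gcongr)
  have hgap :
      0 ≤ C * (α t / t) + (C * α ((s + ε) * ‖h‖) / s - C * α ((s + t) * ‖h‖) / max s t) :=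
    add_nonneg (by have := hαnonneg t ht.le; positivity) (sub_nonneg.2 herr)
  convert add_mem_of_convex_of_smul_mem_s4 hKconv hKcone hslope (hKcone hgap hk) using 1
  module

/-- Let `f : X → Y` be strongly `α(·)`-`k`-paraconvex on an open convex
`Ω ⊆ X` with constant `C ≥ 0`, `k ∈ K \ {0}`. For `x₀ ∈ Ω` and an admissible direction `h`
with `‖h‖ = 1`, the map `φ(t) = (f(x₀+th) − f(x₀))/t + C (α(t)/t) k` (for `t > 0`) is
locally `K`-bounded from below: there are `a ∈ Y` and `δ > 0` with `φ(t) − a ∈ K` for all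
`0 < t < δ`. -/
theorem paraconvex_difference_quotient_bounded_below
    {X Y : Type*} [NormedAddCommGroup X] [NormedSpace ℝ X]
    [NormedAddCommGroup Y] [NormedSpace ℝ Y] [CompleteSpace Y]
    (K : Set Y) (hKclosed : IsClosed K) (hKconv : Convex ℝ K)
    (hKcone : ∀ ⦃c : ℝ⦄, 0 ≤ c → ∀ ⦃y⦄, y ∈ K → c • y ∈ K)
    (k : Y) (hk : k ∈ K) (hk0 : k ≠ 0)
    (Ω : Set X) (hΩopen : IsOpen Ω) (hΩconv : Convex ℝ Ω)
    (α : ℝ → ℝ) (hαnonneg : ∀ t, 0 ≤ t → 0 ≤ α t) (hαmono : MonotoneOn α (Ici 0))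
    (hαlim : Tendsto (fun t => α t / t) (𝓝[>] (0 : ℝ)) (𝓝 0))
    (f : X → Y) (hf : Continuous f) (C : ℝ) (hC : 0 ≤ C)
    (hpara : ∀ x ∈ Ω, ∀ y ∈ Ω, ∀ l : ℝ, 0 ≤ l → l ≤ 1 →
        l • f x + (1 - l) • f y + (C * min l (1 - l) * α ‖x - y‖) • k
          - f (l • x + (1 - l) • y) ∈ K)
    (x₀ : X) (hx₀ : x₀ ∈ Ω) (h : X) (hnorm : ‖h‖ = 1)
    (hadm : ∃ ε > 0, ∀ t : ℝ, 0 < t → t < ε → x₀ + t • h ∈ Ω) :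
    ∃ a : Y, ∃ δ > 0, ∀ t : ℝ, 0 < t → t < δ →
      (t⁻¹ • (f (x₀ + t • h) - f x₀) + (C * (α t / t)) • k) - a ∈ K :=
  paraconvex_difference_quotient_bounded_below_general K hKconv hKcone k hk Ω hΩopen α hαnonneg
    hαmono f C hC hpara x₀ hx₀ h hadm
end

section
/- Let X be a normed space, Y a Banach space, K ⊆ Y a closed convex cone, k ∈ K, and let f : X → Y be strongly α(·)-k-paraconvex on an open convex set Ω ⊆ X. Let x₀ ∈ Ω and suppose the directional derivative f′(x₀;h) = lim_{t→0+}(f(x₀+th)−f(x₀))/t exists for every admissible direction h at x₀. Then f′(x₀;·) is sublinear and positively homogeneous: f′(x₀; h₁+h₂) ≤_K f′(x₀;h₁) + f′(x₀;h₂) whenever h₁, h₂ and h₁+h₂ are admissible at x₀, and f′(x₀; sh) = s·f′(x₀;h) for all s > 0 and admissible h. -/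
open Filter Topology Set

/-!
The directional derivative is a limit of difference quotients `t⁻¹ • (f (x₀ + t • h) - f x₀)`,
so positive homogeneity is a change of variables `t ↦ s * t`. For subadditivity, apply
paraconvexity with `λ = 1/2` to the points `x₀ + 2t • h₁` and `x₀ + 2t • h₂`, whose midpoint is
`x₀ + t • (h₁ + h₂)`, and divide by `t`: the error term is a multiple of `α (2t‖h₁ - h₂‖) / t`,
which tends to `0` because `α(t) = o(t)`, and `K` is closed.
-/

section

variable {X Y : Type*} [NormedAddCommGroup X] [NormedSpace ℝ X]
  [NormedAddCommGroup Y] [NormedSpace ℝ Y]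

noncomputable def dirQuotient (f : X → Y) (x₀ h : X) (t : ℝ) : Y := t⁻¹ • (f (x₀ + t • h) - f x₀)

def IsStronglyParaconvexOn (K : Set Y) (k : Y) (α : ℝ → ℝ) (C : ℝ) (Ω : Set X)
    (f : X → Y) : Prop :=
  ∀ x ∈ Ω, ∀ y ∈ Ω, ∀ l : ℝ, 0 ≤ l → l ≤ 1 →
    l • f x + (1 - l) • f y + (C * min l (1 - l) * α ‖x - y‖) • k - f (l • x + (1 - l) • y) ∈ K

theorem tendsto_const_mul_nhdsGT_zero {c : ℝ} (hc : 0 < c) :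
    Tendsto (c * ·) (𝓝[>] 0) (𝓝[>] 0) := by
  simpa only [comap_mulLeft_nhdsGT_zero hc] using tendsto_comap (f := (c * ·)) (x := 𝓝[>] 0)

theorem tendsto_inv_mul_comp_const_mul {α : ℝ → ℝ} (hαnonneg : ∀ t, 0 ≤ t → 0 ≤ α t)
    (hαmono : MonotoneOn α (Ici 0)) (hαlim : Tendsto (fun t => α t / t) (𝓝[>] 0) (𝓝 0))
    {c : ℝ} (hc : 0 ≤ c) :
    Tendsto (fun t => t⁻¹ * α (c * t)) (𝓝[>] 0) (𝓝 0) := by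
  -- squeeze against `α ((c + 1) t) / t`, which avoids treating `c = 0` separately
  have hc₁ : 0 < c + 1 := by linarith
  have upper : Tendsto (fun t => (c + 1) * (α ((c + 1) * t) / ((c + 1) * t))) (𝓝[>] 0) (𝓝 0) := by
    simpa using (hαlim.comp (tendsto_const_mul_nhdsGT_zero hc₁)).const_mul (c + 1)
  refine tendsto_of_tendsto_of_tendsto_of_le_of_le' tendsto_const_nhds upper ?_ ?_
  all_goals filter_upwards [self_mem_nhdsWithin] with t (ht : 0 < t)
  · exact mul_nonneg (inv_nonneg.2 ht.le) (hαnonneg _ (by positivity))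
  · calc t⁻¹ * α (c * t) ≤ t⁻¹ * α ((c + 1) * t) := by
          gcongr
          exact hαmono (mem_Ici.2 (by positivity)) (mem_Ici.2 (by positivity)) (by nlinarith)
      _ = (c + 1) * (α ((c + 1) * t) / ((c + 1) * t)) := by field_simp

theorem dirQuotient_smul (f : X → Y) (x₀ h : X) {s : ℝ} (hs : s ≠ 0) :
    dirQuotient f x₀ (s • h) = fun t => s • dirQuotient f x₀ h (s * t) := by
  ext t
  simp only [dirQuotient, smul_smul, mul_comm t s]
  congr 1
  field_simp

theorem Filter.Tendsto.dirQuotient_smul {f : X → Y} {x₀ h : X} {v : Y} {s : ℝ} (hs : 0 < s)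
    (hv : Tendsto (dirQuotient f x₀ h) (𝓝[>] 0) (𝓝 v)) :
    Tendsto (dirQuotient f x₀ (s • h)) (𝓝[>] 0) (𝓝 (s • v)) := by
  rw [_root_.dirQuotient_smul f x₀ h hs.ne']
  exact (hv.comp (tendsto_const_mul_nhdsGT_zero hs)).const_smul s

variable {K : Set Y} {k : Y} {α : ℝ → ℝ} {C : ℝ} {Ω : Set X} {f : X → Y} {x₀ : X}

theorem IsStronglyParaconvexOn.dirQuotient_midpoint_mem
    (hpara : IsStronglyParaconvexOn K k α C Ω f)
    (hKcone : ∀ ⦃c : ℝ⦄, 0 ≤ c → ∀ ⦃y⦄, y ∈ K → c • y ∈ K) {h₁ h₂ : X} {t : ℝ} (ht : 0 < t)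
    (hA : x₀ + (2 * t) • h₁ ∈ Ω) (hB : x₀ + (2 * t) • h₂ ∈ Ω) :
    dirQuotient f x₀ h₁ (2 * t) + dirQuotient f x₀ h₂ (2 * t) - dirQuotient f x₀ (h₁ + h₂) t
      + (C / 2 * (t⁻¹ * α (2 * ‖h₁ - h₂‖ * t))) • k ∈ K := by
  have hmem := hKcone (inv_nonneg.2 ht.le) (hpara _ hA _ hB (1 / 2) (by norm_num) (by norm_num))
  have hmid : (1 / 2 : ℝ) • (x₀ + (2 * t) • h₁) + (1 - 1 / 2 : ℝ) • (x₀ + (2 * t) • h₂)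
      = x₀ + t • (h₁ + h₂) := by module
  have hdist : ‖x₀ + (2 * t) • h₁ - (x₀ + (2 * t) • h₂)‖ = 2 * ‖h₁ - h₂‖ * t := by
    rw [add_sub_add_left_eq_sub, ← smul_sub, norm_smul, Real.norm_of_nonneg (by positivity)]
    ring
  rw [hmid, hdist, show min (1 / 2 : ℝ) (1 - 1 / 2) = 1 / 2 by norm_num] at hmem
  convert hmem using 1
  simp only [dirQuotient, mul_inv_rev]
  module

theorem IsStronglyParaconvexOn.sub_mem_of_tendsto_dirQuotient
    (hpara : IsStronglyParaconvexOn K k α C Ω f) (hKclosed : IsClosed K)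
    (hKcone : ∀ ⦃c : ℝ⦄, 0 ≤ c → ∀ ⦃y⦄, y ∈ K → c • y ∈ K)
    (hαnonneg : ∀ t, 0 ≤ t → 0 ≤ α t) (hαmono : MonotoneOn α (Ici 0))
    (hαlim : Tendsto (fun t => α t / t) (𝓝[>] 0) (𝓝 0)) {h₁ h₂ : X} {v₁ v₂ v : Y}
    (hΩ₁ : ∀ᶠ t in 𝓝[>] (0 : ℝ), x₀ + t • h₁ ∈ Ω) (hΩ₂ : ∀ᶠ t in 𝓝[>] (0 : ℝ), x₀ + t • h₂ ∈ Ω)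
    (hv₁ : Tendsto (dirQuotient f x₀ h₁) (𝓝[>] 0) (𝓝 v₁))
    (hv₂ : Tendsto (dirQuotient f x₀ h₂) (𝓝[>] 0) (𝓝 v₂))
    (hv : Tendsto (dirQuotient f x₀ (h₁ + h₂)) (𝓝[>] 0) (𝓝 v)) :
    v₁ + v₂ - v ∈ K := by
  have hdouble := tendsto_const_mul_nhdsGT_zero (two_pos (α := ℝ))
  have herr := (tendsto_inv_mul_comp_const_mul hαnonneg hαmono hαlim
    (by positivity : 0 ≤ 2 * ‖h₁ - h₂‖)).const_mul (C / 2)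
  have hlim := (((hv₁.comp hdouble).add (hv₂.comp hdouble)).sub hv).add (herr.smul_const k)
  rw [mul_zero, zero_smul, add_zero] at hlim
  refine hKclosed.mem_of_tendsto hlim ?_
  filter_upwards [self_mem_nhdsWithin, eventually_nhdsGT_zero_mul_left two_pos hΩ₁,
    eventually_nhdsGT_zero_mul_left two_pos hΩ₂] with t (ht : 0 < t) hA hB
  exact hpara.dirQuotient_midpoint_mem hKcone ht hA hB

end

theorem paraconvex_directional_derivative_sublinear_general
    {X Y : Type*} [NormedAddCommGroup X] [NormedSpace ℝ X]
    [NormedAddCommGroup Y] [NormedSpace ℝ Y]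
    (K : Set Y) (hKclosed : IsClosed K)
    (hKcone : ∀ ⦃c : ℝ⦄, 0 ≤ c → ∀ ⦃y⦄, y ∈ K → c • y ∈ K)
    (k : Y)
    (Ω : Set X)
    (α : ℝ → ℝ) (hαnonneg : ∀ t, 0 ≤ t → 0 ≤ α t) (hαmono : MonotoneOn α (Ici 0))
    (hαlim : Tendsto (fun t => α t / t) (𝓝[>] (0 : ℝ)) (𝓝 0))
    (f : X → Y) (C : ℝ)
    (hpara : ∀ x ∈ Ω, ∀ y ∈ Ω, ∀ l : ℝ, 0 ≤ l → l ≤ 1 →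
        l • f x + (1 - l) • f y + (C * min l (1 - l) * α ‖x - y‖) • k
          - f (l • x + (1 - l) • y) ∈ K)
    (x₀ : X)
    (d : X → Y)
    (hd : ∀ h : X, (∃ ε > 0, ∀ t : ℝ, 0 < t → t < ε → x₀ + t • h ∈ Ω) →
        Tendsto (fun t : ℝ => t⁻¹ • (f (x₀ + t • h) - f x₀)) (𝓝[>] 0) (𝓝 (d h))) :
    (∀ h₁ h₂ : X,
        (∃ ε > 0, ∀ t : ℝ, 0 < t → t < ε → x₀ + t • h₁ ∈ Ω) →
        (∃ ε > 0, ∀ t : ℝ, 0 < t → t < ε → x₀ + t • h₂ ∈ Ω) →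
        (∃ ε > 0, ∀ t : ℝ, 0 < t → t < ε → x₀ + t • (h₁ + h₂) ∈ Ω) →
        d h₁ + d h₂ - d (h₁ + h₂) ∈ K)
      ∧ (∀ s : ℝ, 0 < s → ∀ h : X,
          (∃ ε > 0, ∀ t : ℝ, 0 < t → t < ε → x₀ + t • h ∈ Ω) →
          (∃ ε > 0, ∀ t : ℝ, 0 < t → t < ε → x₀ + t • (s • h) ∈ Ω) →
          d (s • h) = s • d h) := by
  have hev : ∀ {h : X}, (∃ ε > 0, ∀ t : ℝ, 0 < t → t < ε → x₀ + t • h ∈ Ω) →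
      ∀ᶠ t in 𝓝[>] (0 : ℝ), x₀ + t • h ∈ Ω := fun ⟨ε, hε, hΩ⟩ =>
    (nhdsGT_basis 0).eventually_iff.2 ⟨ε, hε, fun t ht => hΩ t ht.1 ht.2⟩
  refine ⟨fun h₁ h₂ hadm₁ hadm₂ hadm => ?_, fun s hs h hadm hadm' => ?_⟩
  · exact IsStronglyParaconvexOn.sub_mem_of_tendsto_dirQuotient hpara hKclosed hKcone hαnonneg
      hαmono hαlim (hev hadm₁) (hev hadm₂) (hd h₁ hadm₁) (hd h₂ hadm₂) (hd _ hadm)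
  · exact tendsto_nhds_unique (hd _ hadm') ((hd h hadm).dirQuotient_smul hs)

/-- Let `f : X → Y` be strongly `α(·)`-`k`-paraconvex on an open convex
`Ω ⊆ X`, `x₀ ∈ Ω`, and suppose the directional derivative `f′(x₀;h)` (one-sided limit)
exists for every admissible direction `h` at `x₀`. Then `f′(x₀;·)` is sublinear:
`f′(x₀;h₁+h₂) ≤_K f′(x₀;h₁) + f′(x₀;h₂)` whenever `h₁`, `h₂`, `h₁+h₂` are admissible, and
positively homogeneous: `f′(x₀;sh) = s f′(x₀;h)` for `s > 0` and admissible `h`, `sh`. -/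
theorem paraconvex_directional_derivative_sublinear
    {X Y : Type*} [NormedAddCommGroup X] [NormedSpace ℝ X]
    [NormedAddCommGroup Y] [NormedSpace ℝ Y] [CompleteSpace Y]
    (K : Set Y) (hKclosed : IsClosed K) (hKconv : Convex ℝ K)
    (hKcone : ∀ ⦃c : ℝ⦄, 0 ≤ c → ∀ ⦃y⦄, y ∈ K → c • y ∈ K)
    (k : Y) (hk : k ∈ K)
    (Ω : Set X) (hΩopen : IsOpen Ω) (hΩconv : Convex ℝ Ω)
    (α : ℝ → ℝ) (hαnonneg : ∀ t, 0 ≤ t → 0 ≤ α t) (hαmono : MonotoneOn α (Ici 0))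
    (hαlim : Tendsto (fun t => α t / t) (𝓝[>] (0 : ℝ)) (𝓝 0))
    (f : X → Y) (hf : Continuous f) (C : ℝ) (hC : 0 ≤ C)
    (hpara : ∀ x ∈ Ω, ∀ y ∈ Ω, ∀ l : ℝ, 0 ≤ l → l ≤ 1 →
        l • f x + (1 - l) • f y + (C * min l (1 - l) * α ‖x - y‖) • k
          - f (l • x + (1 - l) • y) ∈ K)
    (x₀ : X) (hx₀ : x₀ ∈ Ω)
    (d : X → Y)
    (hd : ∀ h : X, (∃ ε > 0, ∀ t : ℝ, 0 < t → t < ε → x₀ + t • h ∈ Ω) →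
        Tendsto (fun t : ℝ => t⁻¹ • (f (x₀ + t • h) - f x₀)) (𝓝[>] 0) (𝓝 (d h))) :
    (∀ h₁ h₂ : X,
        (∃ ε > 0, ∀ t : ℝ, 0 < t → t < ε → x₀ + t • h₁ ∈ Ω) →
        (∃ ε > 0, ∀ t : ℝ, 0 < t → t < ε → x₀ + t • h₂ ∈ Ω) →
        (∃ ε > 0, ∀ t : ℝ, 0 < t → t < ε → x₀ + t • (h₁ + h₂) ∈ Ω) →
        d h₁ + d h₂ - d (h₁ + h₂) ∈ K)
      ∧ (∀ s : ℝ, 0 < s → ∀ h : X,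
          (∃ ε > 0, ∀ t : ℝ, 0 < t → t < ε → x₀ + t • h ∈ Ω) →
          (∃ ε > 0, ∀ t : ℝ, 0 < t → t < ε → x₀ + t • (s • h) ∈ Ω) →
          d (s • h) = s • d h) :=
  paraconvex_directional_derivative_sublinear_general K hKclosed hKcone k Ω α hαnonneg hαmono hαlim
    f C hpara x₀ d hd
end

section
/- Let X be a normed space and Y a Banach space, let K ⊆ Y be a closed convex normal cone, and k ∈ K. Let f : X → Y be strongly α(·)-k-paraconvex on X and locally bounded at x₀ ∈ X. If the directional derivative f′(x₀;h) = lim_{t→0+}(f(x₀+th)−f(x₀))/t exists for all h ∈ X and the map h ↦ f′(x₀;h) is linear, then h ↦ f′(x₀;h) is continuous on X. -/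
open Filter Topology Set

/-- Let `K ⊆ Y` be a closed convex normal cone, `k ∈ K`, and let
`f : X → Y` be strongly `α(·)`-`k`-paraconvex on `X` and locally bounded at `x₀`. If the
directional derivative `f′(x₀;h)` exists for every `h ∈ X` and `h ↦ f′(x₀;h)` is linear,
then `h ↦ f′(x₀;h)` is continuous on `X`. -/
theorem paraconvex_linear_directional_derivative_continuous
    {X Y : Type*} [NormedAddCommGroup X] [NormedSpace ℝ X]
    [NormedAddCommGroup Y] [NormedSpace ℝ Y] [CompleteSpace Y]
    (K : Set Y) (hKclosed : IsClosed K) (hKconv : Convex ℝ K)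
    (hKcone : ∀ ⦃c : ℝ⦄, 0 ≤ c → ∀ ⦃y⦄, y ∈ K → c • y ∈ K)
    (hKnormal : ∃ γ > 0, ∀ x y : Y, x ∈ K → y - x ∈ K → ‖x‖ ≤ γ * ‖y‖)
    (k : Y) (hk : k ∈ K)
    (α : ℝ → ℝ) (hαnonneg : ∀ t, 0 ≤ t → 0 ≤ α t) (hαmono : MonotoneOn α (Ici 0))
    (hαlim : Tendsto (fun t => α t / t) (𝓝[>] (0 : ℝ)) (𝓝 0))
    (f : X → Y) (hf : Continuous f) (C : ℝ) (hC : 0 ≤ C)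
    (hpara : ∀ x y : X, ∀ l : ℝ, 0 ≤ l → l ≤ 1 →
        l • f x + (1 - l) • f y + (C * min l (1 - l) * α ‖x - y‖) • k
          - f (l • x + (1 - l) • y) ∈ K)
    (x₀ : X)
    -- `f` is locally (vector-)bounded at `x₀`
    (hlocbdd : ∃ U : Set X, IsOpen U ∧ x₀ ∈ U ∧
        ∃ k₀ ∈ K, ∀ x ∈ U, f x + k₀ ∈ K ∧ k₀ - f x ∈ K)
    (d : X →ₗ[ℝ] Y)
    (hd : ∀ h : X,
        Tendsto (fun t : ℝ => t⁻¹ • (f (x₀ + t • h) - f x₀)) (𝓝[>] 0) (𝓝 (d h))) :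
    Continuous d := by
  obtain ⟨γ, hγ, hnorm⟩ := hKnormal
  obtain ⟨U, hU, hx₀U, k₀, hk₀K, hbdd⟩ := hlocbdd
  obtain ⟨ε, hε, hball⟩ := Metric.isOpen_iff.1 hU x₀ hx₀U
  set r := ε / 2 with hrdef
  have hrpos : 0 < r := by positivity
  have hrU : ∀ h : X, ‖h‖ ≤ r → x₀ + h ∈ U := by
    intro h hh
    apply hball
    simp only [Metric.mem_ball, dist_eq_norm, add_sub_cancel_left]
    linarith
  -- K is closed under addition
  have Kadd : ∀ {a b : Y}, a ∈ K → b ∈ K → a + b ∈ K := by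
    intro a b ha hb
    have h1 := hKconv ha hb (by norm_num : (0:ℝ) ≤ 1/2) (by norm_num : (0:ℝ) ≤ 1/2)
      (by norm_num)
    have h2 := hKcone (by norm_num : (0:ℝ) ≤ 2) h1
    have : (2:ℝ) • ((1/2:ℝ) • a + (1/2:ℝ) • b) = a + b := by
      rw [smul_add, smul_smul, smul_smul]; norm_num
    rwa [this] at h2
  -- norm bound on f on U
  have hfbdd : ∀ x ∈ U, ‖f x‖ ≤ (1 + 2 * γ) * ‖k₀‖ := by
    intro x hx
    obtain ⟨h1, h2⟩ := hbdd x hx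
    have h3 : (k₀ + k₀) - (f x + k₀) ∈ K := by
      have : (k₀ + k₀) - (f x + k₀) = k₀ - f x := by abel
      rw [this]; exact h2
    have h4 := hnorm _ _ h1 h3
    have h5 : ‖k₀ + k₀‖ ≤ 2 * ‖k₀‖ := by
      calc ‖k₀ + k₀‖ ≤ ‖k₀‖ + ‖k₀‖ := norm_add_le _ _
        _ = 2 * ‖k₀‖ := by ring
    have h6 : ‖f x‖ ≤ ‖f x + k₀‖ + ‖k₀‖ := by
      have := norm_sub_le (f x + k₀) k₀
      simpa using this
    nlinarith [norm_nonneg k₀]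
  -- key order estimate for the derivative
  have key : ∀ h : X, ‖h‖ ≤ r →
      (f (x₀ + h) - f x₀ + (C * α ‖h‖) • k) - d h ∈ K := by
    intro h hh
    set E : Y := f (x₀ + h) - f x₀ + (C * α ‖h‖) • k with hE
    have hmem : ∀ᶠ t in 𝓝[>] (0:ℝ),
        E - t⁻¹ • (f (x₀ + t • h) - f x₀) ∈ K := by
      have hev : ∀ᶠ t in 𝓝[>] (0:ℝ), t ∈ Ioo (0:ℝ) 1 :=
        Ioo_mem_nhdsGT_of_mem (by constructor <;> norm_num)
      filter_upwards [hev] with t ht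
      obtain ⟨ht0, ht1⟩ := ht
      have hA := hpara (x₀ + h) x₀ t ht0.le ht1.le
      have hxy : ‖x₀ + h - x₀‖ = ‖h‖ := by simp
      have hcomb : t • (x₀ + h) + (1 - t) • x₀ = x₀ + t • h := by
        rw [smul_add, sub_smul, one_smul]; abel
      rw [hxy, hcomb] at hA
      have hA2 := hKcone (inv_nonneg.2 ht0.le) hA
      set s : ℝ := C * α ‖h‖ * (1 - min t (1 - t) / t) with hs
      have hs0 : 0 ≤ s := by
        have hmin : min t (1 - t) / t ≤ 1 := by
          rw [div_le_one ht0]; exact min_le_left _ _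
        have hα0 : 0 ≤ α ‖h‖ := hαnonneg _ (norm_nonneg _)
        have : 0 ≤ C * α ‖h‖ := mul_nonneg hC hα0
        nlinarith
      have hsk := hKcone hs0 hk
      have hid : E - t⁻¹ • (f (x₀ + t • h) - f x₀) =
          t⁻¹ • (t • f (x₀ + h) + (1 - t) • f x₀ +
            (C * min t (1 - t) * α ‖h‖) • k - f (x₀ + t • h)) + s • k := by
        rw [hE, hs]
        match_scalars <;> field_simp <;> ring
      rw [hid]
      exact Kadd hA2 hsk
    have htend : Tendsto (fun t : ℝ => E - t⁻¹ • (f (x₀ + t • h) - f x₀))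
        (𝓝[>] (0:ℝ)) (𝓝 (E - d h)) :=
      tendsto_const_nhds.sub (hd h)
    exact hKclosed.mem_of_tendsto htend hmem
  -- uniform bound for d on the ball of radius r
  set M : ℝ := 2 * ((1 + 2 * γ) * ‖k₀‖) + C * α r * ‖k‖ with hM
  have hEbound : ∀ h : X, ‖h‖ ≤ r →
      ‖f (x₀ + h) - f x₀ + (C * α ‖h‖) • k‖ ≤ M := by
    intro h hh
    have h1 : ‖f (x₀ + h)‖ ≤ (1 + 2 * γ) * ‖k₀‖ := hfbdd _ (hrU h hh)
    have h2 : ‖f x₀‖ ≤ (1 + 2 * γ) * ‖k₀‖ := hfbdd _ hx₀U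
    have h3 : ‖(C * α ‖h‖) • k‖ ≤ C * α r * ‖k‖ := by
      rw [norm_smul, Real.norm_eq_abs, abs_of_nonneg
        (mul_nonneg hC (hαnonneg _ (norm_nonneg _)))]
      have hαle : α ‖h‖ ≤ α r := hαmono (norm_nonneg h) hrpos.le hh
      exact mul_le_mul_of_nonneg_right (mul_le_mul_of_nonneg_left hαle hC)
        (norm_nonneg k)
    calc ‖f (x₀ + h) - f x₀ + (C * α ‖h‖) • k‖
        ≤ ‖f (x₀ + h) - f x₀‖ + ‖(C * α ‖h‖) • k‖ := norm_add_le _ _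
      _ ≤ (‖f (x₀ + h)‖ + ‖f x₀‖) + ‖(C * α ‖h‖) • k‖ := by
          have := norm_sub_le (f (x₀ + h)) (f x₀); linarith
      _ ≤ M := by rw [hM]; linarith
  have hdbound : ∀ h : X, ‖h‖ ≤ r → ‖d h‖ ≤ 2 * γ * M + M := by
    intro h hh
    set E : Y := f (x₀ + h) - f x₀ + (C * α ‖h‖) • k with hE
    set E' : Y := f (x₀ + -h) - f x₀ + (C * α ‖-h‖) • k with hE'
    have hk1 : E - d h ∈ K := key h hh
    have hk2 : E' - d (-h) ∈ K := key (-h) (by rwa [norm_neg])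
    rw [map_neg, sub_neg_eq_add] at hk2
    have hx : d h + E' ∈ K := by
      have : E' + d h = d h + E' := by abel
      rwa [this] at hk2
    have hy : (E + E') - (d h + E') ∈ K := by
      have : (E + E') - (d h + E') = E - d h := by abel
      rw [this]; exact hk1
    have h4 := hnorm _ _ hx hy
    have h5 : ‖E‖ ≤ M := hEbound h hh
    have h6 : ‖E'‖ ≤ M := hEbound (-h) (by rwa [norm_neg])
    have h7 : ‖E + E'‖ ≤ 2 * M := by
      have := norm_add_le E E'; linarith
    have h8 : ‖d h‖ ≤ ‖d h + E'‖ + ‖E'‖ := by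
      have := norm_sub_le (d h + E') E'; simpa using this
    nlinarith
  -- conclude continuity
  set CB : ℝ := 2 * γ * M + M with hCB
  apply AddMonoidHomClass.continuous_of_bound d (CB / r)
  intro x
  rcases eq_or_ne x 0 with rfl | hx
  · simp
  · have hxn : 0 < ‖x‖ := norm_pos_iff.2 hx
    have hh : ‖(r / ‖x‖) • x‖ ≤ r := by
      rw [norm_smul, Real.norm_eq_abs, abs_of_nonneg (by positivity)]
      rw [div_mul_cancel₀ _ hxn.ne']
    have hb := hdbound _ hh
    rw [map_smul, norm_smul, Real.norm_eq_abs, abs_of_nonneg (by positivity)] at hb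
    have : ‖d x‖ ≤ CB * ‖x‖ / r := by
      rw [div_mul_eq_mul_div, div_le_iff₀ hxn] at hb
      rw [le_div_iff₀ hrpos]
      nlinarith
    calc ‖d x‖ ≤ CB * ‖x‖ / r := this
      _ = CB / r * ‖x‖ := by ring
end

section
/- Let Y be a Banach space and let K ⊆ Y be a closed convex cone that possesses a bounded base B. Then there exists a continuous linear functional y* ∈ K* (the dual cone) such that y*(b) ≥ 1 for all b ∈ B; in particular, the dual cone K* has nonempty norm interior in Y*. -/
open Filter Topology Set

/-!
Separating `0` from the closed convex set `closure B` gives a continuous functional `φ` with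
`φ ≥ 1` on `B`, hence `φ ≥ 0` on the cone generated by `B`. If `‖b‖ ≤ R` on `B`, every `ψ` with
`‖ψ - φ‖ < R⁻¹` still satisfies `ψ b ≥ φ b - ‖ψ - φ‖ ‖b‖ > 0` on `B`, so the ball of radius
`R⁻¹` around `φ` lies in the dual cone.
-/

theorem exists_strongDual_one_le_of_zero_notMem_closure {E : Type*} [TopologicalSpace E]
    [AddCommGroup E] [Module ℝ E] [IsTopologicalAddGroup E] [ContinuousSMul ℝ E]
    [LocallyConvexSpace ℝ E] {B : Set E} (hB : Convex ℝ B) (hB0 : (0 : E) ∉ closure B) :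
    ∃ φ : StrongDual ℝ E, ∀ b ∈ B, 1 ≤ φ b := by
  obtain ⟨f, u, hfB, hu⟩ := geometric_hahn_banach_closed_point hB.closure isClosed_closure hB0
  rw [map_zero] at hu
  refine ⟨(-u)⁻¹ • -f, fun b hb => ?_⟩
  have hfb : f b < u := hfB b (subset_closure hb)
  simp only [smul_apply, neg_apply, smul_eq_mul]
  rw [le_inv_mul_iff₀ (neg_pos.2 hu)]
  linarith

theorem nonneg_on_cone_of_nonneg_on_base {E : Type*} [AddCommGroup E] [Module ℝ E]
    {B : Set E} {ψ : E →ₗ[ℝ] ℝ} (hψ : ∀ b ∈ B, 0 ≤ ψ b) :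
    ∀ v ∈ {y : E | ∃ l : ℝ, 0 ≤ l ∧ ∃ b ∈ B, y = l • b}, 0 ≤ ψ v := by
  rintro _ ⟨l, hl, b, hb, rfl⟩
  rw [map_smul, smul_eq_mul]
  exact mul_nonneg hl (hψ b hb)

theorem ball_subset_setOf_forall_pos {E : Type*} [NormedAddCommGroup E] [NormedSpace ℝ E]
    {B : Set E} {R : ℝ} (hBR : ∀ b ∈ B, ‖b‖ ≤ R) {φ : StrongDual ℝ E}
    (hφ : ∀ b ∈ B, 1 ≤ φ b) :
    Metric.ball φ R⁻¹ ⊆ {ψ | ∀ b ∈ B, 0 < ψ b} := by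
  intro ψ hψ b hb
  rw [Metric.mem_ball, dist_eq_norm] at hψ
  have hR : 0 < R := inv_pos.1 ((norm_nonneg _).trans_lt hψ)
  have hclose : |ψ b - φ b| < 1 :=
    calc |ψ b - φ b| = ‖(ψ - φ) b‖ := rfl
      _ ≤ ‖ψ - φ‖ * ‖b‖ := (ψ - φ).le_opNorm b
      _ ≤ ‖ψ - φ‖ * R := by gcongr; exact hBR b hb
      _ < R⁻¹ * R := by gcongr
      _ = 1 := inv_mul_cancel₀ hR.ne'
  linarith [hφ b hb, (abs_lt.1 hclose).1]

theorem cone_bounded_base_dual_interior_general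
    {Y : Type*} [NormedAddCommGroup Y] [NormedSpace ℝ Y]
    (K : Set Y)
    (B : Set Y) (hBconv : Convex ℝ B)
    (hBbdd : Bornology.IsBounded B) (hB0 : (0 : Y) ∉ closure B)
    (hBbase : K = {y : Y | ∃ l : ℝ, 0 ≤ l ∧ ∃ b ∈ B, y = l • b}) :
    (∃ φ : StrongDual ℝ Y, (∀ v ∈ K, 0 ≤ φ v) ∧ ∀ b ∈ B, 1 ≤ φ b)
      ∧ (interior {φ : StrongDual ℝ Y | ∀ v ∈ K, 0 ≤ φ v}).Nonempty := by
  obtain ⟨φ, hφ⟩ := exists_strongDual_one_le_of_zero_notMem_closure hBconv hB0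
  obtain ⟨R, hR, hBR⟩ := hBbdd.exists_pos_norm_le
  have hdual (ψ : StrongDual ℝ Y) (hψ : ∀ b ∈ B, 0 ≤ ψ b) : ∀ v ∈ K, 0 ≤ ψ v :=
    hBbase ▸ nonneg_on_cone_of_nonneg_on_base (ψ := (ψ : Y →ₗ[ℝ] ℝ)) hψ
  have hball : Metric.ball φ R⁻¹ ⊆ {ψ : StrongDual ℝ Y | ∀ v ∈ K, 0 ≤ ψ v} :=
    fun ψ hψ => hdual ψ fun b hb => (ball_subset_setOf_forall_pos hBR hφ hψ b hb).le
  exact ⟨⟨φ, hdual φ fun b hb => zero_le_one.trans (hφ b hb), hφ⟩,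
    φ, mem_interior.2 ⟨_, hball, Metric.isOpen_ball, Metric.mem_ball_self (inv_pos.2 hR)⟩⟩

/-- Let `Y` be a Banach space and `K ⊆ Y` a closed convex cone with a
bounded base `B`. Then there is a continuous linear functional `y*` in the dual cone `K*`
with `y*(b) ≥ 1` for all `b ∈ B`; in particular `K*` has nonempty norm interior in `Y*`. -/
theorem cone_bounded_base_dual_interior
    {Y : Type*} [NormedAddCommGroup Y] [NormedSpace ℝ Y] [CompleteSpace Y]
    (K : Set Y) (hKclosed : IsClosed K) (hKconv : Convex ℝ K)
    (hKcone : ∀ ⦃c : ℝ⦄, 0 ≤ c → ∀ ⦃y⦄, y ∈ K → c • y ∈ K)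
    (B : Set Y) (hBconv : Convex ℝ B) (hBK : B ⊆ K)
    (hBbdd : Bornology.IsBounded B) (hB0 : (0 : Y) ∉ closure B)
    (hBbase : K = {y : Y | ∃ l : ℝ, 0 ≤ l ∧ ∃ b ∈ B, y = l • b}) :
    (∃ φ : StrongDual ℝ Y, (∀ v ∈ K, 0 ≤ φ v) ∧ ∀ b ∈ B, 1 ≤ φ b)
      ∧ (interior {φ : StrongDual ℝ Y | ∀ v ∈ K, 0 ≤ φ v}).Nonempty :=
  cone_bounded_base_dual_interior_general K B hBconv hBbdd hB0 hBbase
end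

section
/- Let Ω ⊆ ℝ be an open convex bounded set, let Y = c₀ (the Banach space of real sequences converging to zero with the supremum norm), K = c₀⁺ = {x = (x_i) ∈ c₀ : x_i ≥ 0 for all i}, and let k = (k₁, k₂, …) ∈ c₀⁺. Suppose f : Ω → c₀ is given by f(x) = (f₁(x)k₁, f₂(x)k₂, …), where for each i, f_i(x) = u₁ⁱ(x) + u₂ⁱ(x) with u₁ⁱ convex on Ω, u₂ⁱ ∈ C²(Ω), and sup_i ‖D²u₂ⁱ‖_∞ ≤ C for some constant C ≥ 0. Then f is strongly 2-k-paraconvex on Ω, i.e. there is C' ≥ 0 such that f(λx + (1−λ)y) ≤_K λf(x) + (1−λ)f(y) + C'·min{λ,1−λ}·|x−y|²·k for all x, y ∈ Ω and λ ∈ [0,1]. -/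
open ZeroAtInfty

/-!
A `C²` function whose second derivative is bounded below by `-C` becomes convex after adding
`C/2 · t²`, so each `fᵢ = u₁ⁱ + u₂ⁱ` is semiconvex with the constant `C` independent of `i`.
Since `λx² + (1-λ)y² - (λx + (1-λ)y)² = λ(1-λ)(x-y)² ≤ min{λ, 1-λ}(x-y)²`, this is the scalar
paraconvexity inequality with `C' = C/2`; multiplying it by `kᵢ ≥ 0` gives the inequality in
every coordinate of `c₀`.
-/

theorem convexOn_add_half_mul_sq_of_neg_le_deriv2 {s : Set ℝ} (hs : IsOpen s) (hs' : Convex ℝ s)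
    {g : ℝ → ℝ} (hg : ContDiffOn ℝ 2 g s) {C : ℝ} (hC : ∀ x ∈ s, -C ≤ deriv (deriv g) x) :
    ConvexOn ℝ s fun t => g t + C / 2 * t ^ 2 := by
  have hg' : DifferentiableOn ℝ g s := hg.differentiableOn two_ne_zero
  have hg'' : DifferentiableOn ℝ (deriv g) s :=
    (hg.deriv_of_isOpen hs (by norm_num)).differentiableOn one_ne_zero
  refine convexOn_of_hasDerivWithinAt2_nonneg hs' (f' := fun t => deriv g t + C * t)
    (f'' := fun t => deriv (deriv g) t + C) (hg'.continuousOn.add (by fun_prop)) ?_ ?_ ?_ <;>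
    rw [hs.interior_eq]
  · intro x hx
    have := ((hg'.differentiableAt (hs.mem_nhds hx)).hasDerivAt.fun_add
      ((hasDerivAt_pow 2 x).const_mul (C / 2))).hasDerivWithinAt (s := s)
    exact this.congr_deriv (by push_cast; ring)
  · intro x hx
    have := ((hg''.differentiableAt (hs.mem_nhds hx)).hasDerivAt.fun_add
      ((hasDerivAt_id x).const_mul C)).hasDerivWithinAt (s := s)
    simpa using this
  · intro x hx
    linarith [hC x hx]

theorem ConvexOn.map_combo_le_of_add_half_mul_sq {s : Set ℝ} {h : ℝ → ℝ} {C : ℝ}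
    (hconv : ConvexOn ℝ s fun t => h t + C / 2 * t ^ 2) {x y l : ℝ} (hx : x ∈ s) (hy : y ∈ s)
    (hl₀ : 0 ≤ l) (hl₁ : l ≤ 1) :
    h (l * x + (1 - l) * y) ≤ l * h x + (1 - l) * h y + C / 2 * (l * (1 - l)) * (x - y) ^ 2 := by
  have := hconv.2 hx hy hl₀ (sub_nonneg.2 hl₁) (add_sub_cancel l 1)
  simp only [smul_eq_mul] at this
  linear_combination this

theorem mul_one_sub_le_min_s17 {l : ℝ} (hl₀ : 0 ≤ l) (hl₁ : l ≤ 1) : l * (1 - l) ≤ min l (1 - l) :=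
  le_min (mul_le_of_le_one_right hl₀ (by linarith)) (mul_le_of_le_one_left (by linarith) hl₁)

theorem c0_example_strongly_two_paraconvex_general
    (Ω : Set ℝ) (hΩopen : IsOpen Ω) (hΩconv : Convex ℝ Ω)
    (k : C₀(ℕ, ℝ)) (hk : ∀ i : ℕ, 0 ≤ k i)
    (u₁ u₂ : ℕ → ℝ → ℝ)
    (hu₁conv : ∀ i : ℕ, ConvexOn ℝ Ω (u₁ i))
    (hu₂smooth : ∀ i : ℕ, ContDiffOn ℝ 2 (u₂ i) Ω)
    (C : ℝ) (hC : 0 ≤ C)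
    (hu₂bdd : ∀ i : ℕ, ∀ x ∈ Ω, |deriv (deriv (u₂ i)) x| ≤ C)
    (f : ℝ → C₀(ℕ, ℝ))
    (hf : ∀ x ∈ Ω, ∀ i : ℕ, f x i = (u₁ i x + u₂ i x) * k i) :
    ∃ C' : ℝ, 0 ≤ C' ∧ ∀ x ∈ Ω, ∀ y ∈ Ω, ∀ l : ℝ, 0 ≤ l → l ≤ 1 → ∀ i : ℕ,
      0 ≤ (l • f x + (1 - l) • f y + (C' * min l (1 - l) * |x - y| ^ 2) • k
            - f (l * x + (1 - l) * y)) i := by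
  refine ⟨C / 2, by positivity, fun x hx y hy l hl₀ hl₁ i => ?_⟩
  have hsemiconv : ConvexOn ℝ Ω fun t => (u₁ i t + u₂ i t) + C / 2 * t ^ 2 :=
    ((hu₁conv i).add (convexOn_add_half_mul_sq_of_neg_le_deriv2 hΩopen hΩconv
      (hu₂smooth i) fun x hx => neg_le_of_abs_le (hu₂bdd i x hx))).congr
      fun t _ => (add_assoc _ _ _).symm
  have hscalar := hsemiconv.map_combo_le_of_add_half_mul_sq hx hy hl₀ hl₁
  have hparaconv : u₁ i (l * x + (1 - l) * y) + u₂ i (l * x + (1 - l) * y) ≤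
      l * (u₁ i x + u₂ i x) + (1 - l) * (u₁ i y + u₂ i y) + C / 2 * min l (1 - l) * (x - y) ^ 2 :=
    hscalar.trans (by gcongr; exact mul_one_sub_le_min_s17 hl₀ hl₁)
  have hz : l * x + (1 - l) * y ∈ Ω := hΩconv hx hy hl₀ (sub_nonneg.2 hl₁) (add_sub_cancel l 1)
  simp only [ZeroAtInftyContinuousMap.coe_sub, ZeroAtInftyContinuousMap.coe_add,
    ZeroAtInftyContinuousMap.coe_smul, Pi.sub_apply, Pi.add_apply, Pi.smul_apply, smul_eq_mul,
    hf x hx, hf y hy, hf _ hz, sq_abs]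
  linarith [mul_le_mul_of_nonneg_right hparaconv (hk i)]

/-- Let `Ω ⊆ ℝ` be an open convex bounded set, `Y = c₀` (realized as
`C₀(ℕ, ℝ)`, sequences tending to `0` with the sup norm), `K = c₀⁺` the cone of
coordinatewise-nonnegative elements, and `k ∈ c₀⁺`. Suppose `f : Ω → c₀` is given
coordinatewise by `f(x)ᵢ = fᵢ(x)·kᵢ` with `fᵢ = u₁ⁱ + u₂ⁱ`, where `u₁ⁱ` is convex on `Ω`,
`u₂ⁱ ∈ C²(Ω)` and `|D²u₂ⁱ| ≤ C` on `Ω` uniformly in `i`. Then `f` is strongly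
`2`-`k`-paraconvex on `Ω`: there is `C' ≥ 0` with
`f(λx+(1−λ)y) ≤_K λf(x) + (1−λ)f(y) + C'·min{λ,1−λ}·|x−y|²·k` on `Ω`. -/
theorem c0_example_strongly_two_paraconvex
    (Ω : Set ℝ) (hΩopen : IsOpen Ω) (hΩconv : Convex ℝ Ω)
    (hΩbdd : Bornology.IsBounded Ω)
    (k : C₀(ℕ, ℝ)) (hk : ∀ i : ℕ, 0 ≤ k i)
    (u₁ u₂ : ℕ → ℝ → ℝ)
    (hu₁conv : ∀ i : ℕ, ConvexOn ℝ Ω (u₁ i))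
    (hu₂smooth : ∀ i : ℕ, ContDiffOn ℝ 2 (u₂ i) Ω)
    (C : ℝ) (hC : 0 ≤ C)
    (hu₂bdd : ∀ i : ℕ, ∀ x ∈ Ω, |deriv (deriv (u₂ i)) x| ≤ C)
    (f : ℝ → C₀(ℕ, ℝ))
    (hf : ∀ x ∈ Ω, ∀ i : ℕ, f x i = (u₁ i x + u₂ i x) * k i) :
    ∃ C' : ℝ, 0 ≤ C' ∧ ∀ x ∈ Ω, ∀ y ∈ Ω, ∀ l : ℝ, 0 ≤ l → l ≤ 1 → ∀ i : ℕ,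
      0 ≤ (l • f x + (1 - l) • f y + (C' * min l (1 - l) * |x - y| ^ 2) • k
            - f (l * x + (1 - l) * y)) i :=
  c0_example_strongly_two_paraconvex_general Ω hΩopen hΩconv k hk u₁ u₂ hu₁conv hu₂smooth C hC
    hu₂bdd f hf
end
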